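/- Let X and Y be discrete random variables taking values in finite sets S₁ and S₂ respectively. Then there exists a function t : S₂ → S₁ such that ℙ[X ≠ t(Y)] ≤ 1 - 2^{I(X;Y) - H(X)}. -/

import Mathlib

open scoped Classical

/-- Probability of an event under distribution `D` on a finite sample space. -/
noncomputable def pr {Ω : Type*} [Fintype Ω] (D : Ω → ℝ) (p : Ω → Prop) : ℝ :=
  ∑ x, if p x then D x else 0

/-- Shannon entropy (base 2) of a random variable `f` under `D`. -/
noncomputable def ent {Ω A : Type*} [Fintype Ω] (D : Ω → ℝ) (f : Ω → A) : ℝ :=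
  -∑ a ∈ Finset.image f Finset.univ,
      pr D (fun x => f x = a) * Real.logb 2 (pr D (fun x => f x = a))

/-- Mutual information (base 2) between random variables `f` and `g` under `D`. -/
noncomputable def mi {Ω A B : Type*} [Fintype Ω] (D : Ω → ℝ) (f : Ω → A) (g : Ω → B) : ℝ :=
  ent D f + ent D g - ent D (fun x => (f x, g x))

/-- Binary entropy function (base 2). -/
noncomputable def binEnt (p : ℝ) : ℝ := -(p * Real.logb 2 p) - (1 - p) * Real.logb 2 (1 - p)

/-- `D` is a probability distribution. -/
def IsProb {Ω : Type*} [Fintype Ω] (D : Ω → ℝ) : Prop :=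
  (∀ x, 0 ≤ D x) ∧ ∑ x, D x = 1

section aux
variable {Ω : Type*} [Fintype Ω] (D : Ω → ℝ)

lemma pr_nonneg (hD : ∀ x, 0 ≤ D x) (p : Ω → Prop) : 0 ≤ pr D p := by
  apply Finset.sum_nonneg; intro x _; split
  · exact hD x
  · exact le_rfl

lemma pr_congr {p q : Ω → Prop} (h : ∀ ω, p ω ↔ q ω) : pr D p = pr D q := by
  unfold pr; apply Finset.sum_congr rfl; intro ω _; rw [if_congr (h ω) rfl rfl]

lemma pr_mono (hD : ∀ x, 0 ≤ D x) {p q : Ω → Prop} (h : ∀ ω, p ω → q ω) :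
    pr D p ≤ pr D q := by
  apply Finset.sum_le_sum; intro ω _
  by_cases hp : p ω
  · simp [hp, h ω hp]
  · simp only [hp, if_false]; split
    · exact hD ω
    · exact le_rfl

lemma pr_not (hD : IsProb D) (p : Ω → Prop) : pr D (fun ω => ¬ p ω) = 1 - pr D p := by
  unfold pr
  rw [eq_sub_iff_add_eq, ← Finset.sum_add_distrib, ← hD.2]
  apply Finset.sum_congr rfl; intro ω _
  by_cases hp : p ω <;> simp [hp]

lemma pr_partition {C : Type*} [DecidableEq C] (g : Ω → C) (p : Ω → Prop) :
    ∑ c ∈ Finset.image g Finset.univ, pr D (fun ω => g ω = c ∧ p ω) = pr D p := by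
  unfold pr
  rw [Finset.sum_comm]
  apply Finset.sum_congr rfl
  intro ω _
  by_cases hp : p ω
  · simp only [hp, and_true]
    rw [Finset.sum_ite_eq (Finset.image g Finset.univ) (g ω) (fun _ => D ω)]
    simp
  · simp [hp]

end aux


/-- Fano converse: there exists a decoder `t : S₂ → S₁` with
`ℙ[X ≠ t(Y)] ≤ 1 - 2^(I(X;Y) - H(X))`. -/
theorem fano_converse {Ω A B : Type*} [Fintype Ω] [Nonempty A] (D : Ω → ℝ) (hD : IsProb D)
    (X : Ω → A) (Y : Ω → B) :
    ∃ t : B → A, pr D (fun ω => X ω ≠ t (Y ω)) ≤ 1 - (2 : ℝ) ^ (mi D X Y - ent D X) := by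
  classical
  have hD0 := hD.1
  set S : Finset A := Finset.image X Finset.univ with hS
  set T : Finset B := Finset.image Y Finset.univ with hT
  set I : Finset (A × B) := Finset.image (fun ω => (X ω, Y ω)) Finset.univ with hI
  set p : A × B → ℝ := fun c => pr D (fun ω => (X ω, Y ω) = c) with hp
  set q : B → ℝ := fun b => pr D (fun ω => Y ω = b) with hq
  -- Ω is nonempty
  have hΩ : Nonempty Ω := by
    by_contra h
    rw [not_nonempty_iff] at h
    have := hD.2
    simp [Finset.univ_eq_empty] at this
  have hSne : S.Nonempty := by
    obtain ⟨ω⟩ := hΩ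
    exact ⟨X ω, Finset.mem_image_of_mem X (Finset.mem_univ ω)⟩
  -- decoder
  have ht : ∀ b : B, ∃ a ∈ S, ∀ a' ∈ S, p (a', b) ≤ p (a, b) := fun b =>
    S.exists_max_image (fun a => p (a, b)) hSne
  choose t htS htmax using ht
  refine ⟨t, ?_⟩
  -- basic facts
  have hp0 : ∀ c, 0 ≤ p c := fun c => pr_nonneg D hD0 _
  have hq0 : ∀ b, 0 ≤ q b := fun b => pr_nonneg D hD0 _
  have hpq : ∀ c : A × B, p c ≤ q c.2 := by
    intro c
    apply pr_mono D hD0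
    intro ω h
    rw [← h]
  -- sum of joint is 1
  have hprT : pr D (fun _ : Ω => True) = 1 := by
    unfold pr; simpa using hD.2
  have hsum1 : ∑ c ∈ I, p c = 1 := by
    calc ∑ c ∈ I, p c = ∑ c ∈ I, pr D (fun ω => (X ω, Y ω) = c ∧ True) := by
          apply Finset.sum_congr rfl; intro c _; apply pr_congr; intro ω; simp
      _ = pr D (fun _ : Ω => True) := by rw [hI]; exact pr_partition D _ _
      _ = 1 := hprT
  -- marginal: ∑ over fibers of p equals q
  have hmarg : ∀ b : B, ∑ c ∈ I.filter (fun c => c.2 = b), p c = q b := by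
    intro b
    have h1 : ∑ c ∈ I, pr D (fun ω => (X ω, Y ω) = c ∧ Y ω = b) = q b := by
      simp only [hI, hq]; exact pr_partition D (fun ω => (X ω, Y ω)) (fun ω => Y ω = b)
    rw [← h1, Finset.sum_filter]
    apply Finset.sum_congr rfl
    intro c _
    by_cases hc : c.2 = b
    · rw [if_pos hc]
      apply pr_congr; intro ω
      constructor
      · intro h; exact ⟨h, by rw [← hc, ← h]⟩
      · intro h; exact h.1
    · rw [if_neg hc]
      unfold pr
      rw [eq_comm, Finset.sum_eq_zero]
      intro ω _
      rw [if_neg]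
      rintro ⟨h1', h2'⟩
      exact hc (by rw [← h1']; exact h2')
  -- fibers map into T, first coords in S
  have hfib : ∀ c ∈ I, c.2 ∈ T := by
    intro c hc
    rw [hI, Finset.mem_image] at hc
    obtain ⟨ω, _, rfl⟩ := hc
    exact Finset.mem_image_of_mem Y (Finset.mem_univ ω)
  have hfst : ∀ c ∈ I, c.1 ∈ S := by
    intro c hc
    rw [hI, Finset.mem_image] at hc
    obtain ⟨ω, _, rfl⟩ := hc
    exact Finset.mem_image_of_mem X (Finset.mem_univ ω)
  -- probability of correct decoding
  have hcorrect : pr D (fun ω => X ω = t (Y ω)) = ∑ b ∈ T, p (t b, b) := by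
    have h1 : ∑ b ∈ T, pr D (fun ω => Y ω = b ∧ X ω = t (Y ω))
        = pr D (fun ω => X ω = t (Y ω)) := by
      simp only [hT]; exact pr_partition D Y _
    rw [← h1]
    apply Finset.sum_congr rfl
    intro b _
    apply pr_congr
    intro ω
    constructor
    · rintro ⟨h1', h2'⟩; rw [Prod.mk.injEq]; exact ⟨by rw [h2', h1'], h1'⟩
    · rintro h'; rw [Prod.mk.injEq] at h'; exact ⟨h'.2, by rw [h'.1, h'.2]⟩
  -- entropies
  have hentY : ent D Y = -∑ b ∈ T, q b * Real.logb 2 (q b) := rfl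
  have hentP : ent D (fun ω => (X ω, Y ω)) = -∑ c ∈ I, p c * Real.logb 2 (p c) := by
    rw [ent, hI]
    congr!
  -- z
  set z : A × B → ℝ := fun c => Real.logb 2 (p c / q c.2) with hz
  have hqlog : ∑ b ∈ T, q b * Real.logb 2 (q b)
      = ∑ c ∈ I, p c * Real.logb 2 (q c.2) := by
    rw [← Finset.sum_fiberwise_of_maps_to hfib (fun c => p c * Real.logb 2 (q c.2))]
    apply Finset.sum_congr rfl
    intro b hb
    calc q b * Real.logb 2 (q b)
        = ∑ c ∈ I.filter (fun c => c.2 = b), p c * Real.logb 2 (q b) := by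
          rw [← Finset.sum_mul, hmarg b]
      _ = ∑ c ∈ I.filter (fun c => c.2 = b), p c * Real.logb 2 (q c.2) := by
          apply Finset.sum_congr rfl
          intro c hc
          rw [Finset.mem_filter] at hc
          rw [hc.2]
  have hEnt : ent D Y - ent D (fun ω => (X ω, Y ω)) = ∑ c ∈ I, p c * z c := by
    rw [hentY, hentP, hqlog, neg_sub_neg, ← Finset.sum_sub_distrib]
    apply Finset.sum_congr rfl
    intro c hc
    rcases eq_or_lt_of_le (hp0 c) with h0 | h0
    · simp [hz, ← h0]
    · have hqpos : 0 < q c.2 := lt_of_lt_of_le h0 (hpq c)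
      rw [hz]
      simp only []
      rw [Real.logb_div (ne_of_gt h0) (ne_of_gt hqpos)]
      ring
  -- convexity of 2^x
  have hconv : ConvexOn ℝ Set.univ (fun x : ℝ => (2:ℝ) ^ x) := by
    have h := (convexOn_exp).comp_affineMap
      ((LinearMap.lsmul ℝ ℝ).flip (Real.log 2)).toAffineMap
    simp only [Set.preimage_univ] at h
    have h2 : (fun x : ℝ => (2:ℝ) ^ x)
        = Real.exp ∘ ((LinearMap.lsmul ℝ ℝ).flip (Real.log 2)).toAffineMap := by
      funext x
      simp [Real.rpow_def_of_pos, mul_comm]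
    rw [h2]
    exact h
  -- Jensen
  have hJensen : (2:ℝ) ^ (∑ c ∈ I, p c * z c) ≤ ∑ c ∈ I, p c * (2:ℝ) ^ (z c) := by
    have h := hconv.map_sum_le (fun c _ => hp0 c) hsum1 (fun c _ => Set.mem_univ (z c))
    simpa [smul_eq_mul] using h
  -- termwise evaluation
  have hterm : ∀ c ∈ I, p c * (2:ℝ) ^ (z c) = p c * (p c / q c.2) := by
    intro c _
    rcases eq_or_lt_of_le (hp0 c) with h0 | h0
    · rw [← h0]; ring
    · have hqpos : 0 < q c.2 := lt_of_lt_of_le h0 (hpq c)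
      rw [hz]
      simp only []
      rw [Real.rpow_logb (by norm_num) (by norm_num) (div_pos h0 hqpos)]
  -- the sum is at most the decoding probability
  have hfinal : ∑ c ∈ I, p c * (p c / q c.2) ≤ ∑ b ∈ T, p (t b, b) := by
    rw [← Finset.sum_fiberwise_of_maps_to hfib (fun c => p c * (p c / q c.2))]
    apply Finset.sum_le_sum
    intro b hb
    rcases eq_or_lt_of_le (hq0 b) with hqb | hqb
    · rw [Finset.sum_eq_zero]
      · exact hp0 _
      · intro c hc
        rw [Finset.mem_filter] at hc
        have hc0 : p c = 0 := by
          have h1 := hpq c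
          rw [hc.2, ← hqb] at h1
          exact le_antisymm h1 (hp0 c)
        simp [hc0]
    · have hle : ∀ c ∈ I.filter (fun c => c.2 = b), p c ≤ p (t b, b) := by
        intro c hc
        rw [Finset.mem_filter] at hc
        have h1 := htmax b c.1 (hfst c hc.1)
        have : (c.1, b) = c := by rw [← hc.2]
        rwa [this] at h1
      calc ∑ c ∈ I.filter (fun c => c.2 = b), p c * (p c / q c.2)
          = (∑ c ∈ I.filter (fun c => c.2 = b), p c * p c) / q b := by
            rw [Finset.sum_div]
            apply Finset.sum_congr rfl
            intro c hc
            rw [Finset.mem_filter] at hc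
            rw [hc.2]; ring
        _ ≤ (∑ c ∈ I.filter (fun c => c.2 = b), p (t b, b) * p c) / q b := by
            apply (div_le_div_iff_of_pos_right hqb).mpr
            exact Finset.sum_le_sum fun c hc => mul_le_mul_of_nonneg_right (hle c hc) (hp0 c)
        _ = p (t b, b) := by
            rw [← Finset.mul_sum, hmarg b]
            field_simp
  -- assemble
  have hexp : mi D X Y - ent D X = ent D Y - ent D (fun ω => (X ω, Y ω)) := by
    rw [mi]; ring
  have hne : pr D (fun ω => X ω ≠ t (Y ω)) = 1 - pr D (fun ω => X ω = t (Y ω)) :=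
    pr_not D hD (fun ω => X ω = t (Y ω))
  rw [hne, hexp, hEnt]
  have : (2:ℝ) ^ (∑ c ∈ I, p c * z c) ≤ pr D (fun ω => X ω = t (Y ω)) := by
    rw [hcorrect]
    refine hJensen.trans (le_trans (le_of_eq (Finset.sum_congr rfl hterm)) hfinal)
  linarith
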